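/- For every real u > 0 there exists a constant S > 0 such that for all integers g ≥ 0, n ≥ 0 with 2g−2+n > 0 and every integer κ with 0 ≤ κ ≤ D := 3g−3+n: 15^{−(D−κ)} · 6^{−(2g−2+n)} · (4D+1−2κ)!! / ((D−κ)! · 24^g · g!) · (3/2)^{3g−4+2n−κ} · u^{−(5g−5+2n−κ)} ≤ S · (2u/27)^g · P(u)^{D} · D!/g!. -/

import Mathlib

/-!
With `D = 3g - 3 + n` and `m = D - κ`, all elementary powers cancel and the claim becomes
`(2(m + D) + 1)‼ ≤ C(u) (10u)^m (4u P(u))^D m! D!` for `m ≤ D`. Writing `k = m + D`,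
`(2k + 1)‼ 2^k = (2k + 1) binom(2k, k) binom(k, m) m! D!`; the central binomial coefficient is at
most `4^k / √(k + 1)` and, for `0 < q < 1`, the binomial probability `binom(k, m) q^m (1 - q)^D` is
at most `4 / √((k + 1) q (1 - q))`. Hence `(2k + 1)‼ ≤ 8/√(q(1 - q)) (2/q)^m (2/(1 - q))^D m! D!`,
and for `u ≥ 2/5` the choice `q = 1/(5u)` turns `2/q` into `10u` and `2/(1 - q)` into `4u P(u)`.
-/

noncomputable section

/-- The function `P` from the upper bound on Painlevé I amplitudes. -/
def Pfun (u : ℝ) : ℝ := if u < 2/5 then 2 / (5 * u^2) else 5 / (10 * u - 2)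

open Nat Finset

def binomProb (k : ℕ) (q : ℝ) (i : ℕ) : ℝ := k.choose i * q ^ i * (1 - q) ^ (k - i)

section binomProb

variable {q : ℝ} (k : ℕ)

lemma binomProb_nonneg (hq0 : 0 ≤ q) (hq1 : q ≤ 1) (i : ℕ) : 0 ≤ binomProb k q i := by
  unfold binomProb
  have : 0 ≤ 1 - q := by linarith
  positivity

lemma binomProb_eq_zero_of_lt {i : ℕ} (hi : k < i) : binomProb k q i = 0 := by
  simp [binomProb, Nat.choose_eq_zero_of_lt hi]

lemma sum_binomProb_range : ∑ i ∈ range (k + 1), binomProb k q i = 1 := by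
  have h := (add_pow q (1 - q) k).symm
  rw [add_sub_cancel, one_pow] at h
  rw [← h]
  exact sum_congr rfl fun i _ ↦ by rw [binomProb]; ring

lemma sum_binomProb_le_one (hq0 : 0 ≤ q) (hq1 : q ≤ 1) (s : Finset ℕ) :
    ∑ i ∈ s, binomProb k q i ≤ 1 := by
  have hsupp : ∀ i ∈ s, binomProb k q i ≠ 0 → i ≤ k := fun i _ hi ↦
    not_lt.mp fun h ↦ hi (binomProb_eq_zero_of_lt k h)
  rw [← sum_filter_of_ne hsupp, ← sum_binomProb_range k (q := q)]
  refine sum_le_sum_of_subset_of_nonneg (fun i hi ↦ ?_) fun i _ _ ↦ binomProb_nonneg k hq0 hq1 i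
  simp only [mem_filter] at hi
  exact mem_range.mpr (Nat.lt_succ_of_le hi.2)

lemma binomProb_succ_mul (i : ℕ) :
    binomProb k q (i + 1) * ((i + 1) * (1 - q)) = binomProb k q i * ((k - i : ℕ) * q) := by
  rcases lt_or_ge i k with hik | hki
  · have hchoose : (k.choose (i + 1) : ℝ) * (i + 1) = k.choose i * (k - i : ℕ) := by
      exact_mod_cast Nat.choose_succ_right_eq k i
    obtain ⟨e, he⟩ : ∃ e, k - i = e + 1 := ⟨k - i - 1, by omega⟩
    rw [he] at hchoose
    rw [binomProb, binomProb, he, show k - (i + 1) = e by omega]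
    linear_combination q ^ i * (1 - q) ^ e * q * (1 - q) * hchoose
  · simp [binomProb_eq_zero_of_lt k (Nat.lt_succ_of_le hki), Nat.sub_eq_zero_of_le hki]

lemma binomProb_one_sub {i : ℕ} (hi : i ≤ k) : binomProb k (1 - q) (k - i) = binomProb k q i := by
  rw [binomProb, binomProb, Nat.choose_symm hi, Nat.sub_sub_self hi, sub_sub_cancel]
  ring

end binomProb

lemma pow_mul_le_of_mul_le_succ {p : ℕ → ℝ} {ρ : ℝ} (hρ : 0 ≤ ρ) {m w : ℕ}
    (h : ∀ i, m ≤ i → i < m + w → ρ * p i ≤ p (i + 1)) : ∀ j ≤ w, ρ ^ j * p m ≤ p (m + j) := by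
  intro j hj
  induction j with
  | zero => simp
  | succ j ih =>
    calc ρ ^ (j + 1) * p m = ρ * (ρ ^ j * p m) := by ring
      _ ≤ ρ * p (m + j) := by gcongr; exact ih (by omega)
      _ ≤ p (m + j + 1) := h _ (by omega) (by omega)

lemma succ_mul_pow_mul_le_sum_Ico {p : ℕ → ℝ} {ρ : ℝ} (hρ0 : 0 ≤ ρ) (hρ1 : ρ ≤ 1) {m w : ℕ}
    (hp : 0 ≤ p m) (h : ∀ i, m ≤ i → i < m + w → ρ * p i ≤ p (i + 1)) :
    ((w : ℝ) + 1) * (ρ ^ w * p m) ≤ ∑ i ∈ Ico m (m + w + 1), p i := by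
  calc ((w : ℝ) + 1) * (ρ ^ w * p m) = ∑ _j ∈ range (w + 1), ρ ^ w * p m := by simp
    _ ≤ ∑ j ∈ range (w + 1), p (m + j) := by
        refine sum_le_sum fun j hj ↦ ?_
        have hj : j ≤ w := Nat.lt_succ_iff.mp (mem_range.mp hj)
        calc ρ ^ w * p m ≤ ρ ^ j * p m :=
              mul_le_mul_of_nonneg_right (pow_le_pow_of_le_one hρ0 hρ1 hj) hp
          _ ≤ p (m + j) := pow_mul_le_of_mul_le_succ hρ0 h j hj
    _ = ∑ i ∈ Ico m (m + w + 1), p i := by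
        rw [sum_Ico_eq_sum_range, show m + w + 1 - m = w + 1 by omega]

section binomProbBound

variable {q : ℝ} (hq0 : 0 < q) (hq1 : q < 1) {k m : ℕ}
include hq0 hq1

lemma one_sub_mul_binomProb_le_succ {w i : ℕ} (hw : 2 * (w : ℝ) ≤ (k + 1) * q * (1 - q))
    (hi : (i : ℝ) + 1 ≤ q * (k + 1) + w) :
    (1 - 2 * w / ((k + 1) * q * (1 - q))) * binomProb k q i ≤ binomProb k q (i + 1) := by
  set T := (k + 1) * q * (1 - q)
  have h1q : 0 < 1 - q := by linarith
  have hT0 : 0 < T := by positivity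
  have hρ0 : 0 ≤ 1 - 2 * w / T := by rw [sub_nonneg, div_le_one hT0]; exact hw
  have hki : (k : ℝ) - i ≤ (k - i : ℕ) := by
    rw [sub_le_iff_le_add]; exact_mod_cast le_tsub_add
  have hratio : (1 - 2 * w / T) * ((i + 1) * (1 - q)) ≤ (k - i : ℕ) * q := by
    calc (1 - 2 * w / T) * ((i + 1) * (1 - q)) ≤ (1 - 2 * w / T) * (T + w * (1 - q)) := by
          gcongr; nlinarith
      _ = T - w * q - w - 2 * w ^ 2 * (1 - q) / T := by field_simp; ring
      _ ≤ T - w * q := by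
          have : 0 ≤ 2 * (w : ℝ) ^ 2 * (1 - q) / T := by positivity
          linarith [Nat.cast_nonneg (α := ℝ) w]
      _ ≤ (k - i : ℕ) * q := by nlinarith
  refine le_of_mul_le_mul_right ?_ (show 0 < ((i : ℝ) + 1) * (1 - q) by positivity)
  calc (1 - 2 * w / T) * binomProb k q i * ((i + 1) * (1 - q))
      = binomProb k q i * ((1 - 2 * w / T) * ((i + 1) * (1 - q))) := by ring
    _ ≤ binomProb k q i * ((k - i : ℕ) * q) := by
        gcongr
        exact binomProb_nonneg k hq0.le hq1.le i
    _ = binomProb k q (i + 1) * ((i + 1) * (1 - q)) := (binomProb_succ_mul k i).symm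

/- With `T = (k+1)q(1-q)` and `w ≈ √T/2`, the ratio of consecutive terms stays above
`1 - 2w/T` for `w` steps after any `m` below the mean, so by Bernoulli the `w + 1` terms from `m`
on are all at least half the `m`-th; as they sum to at most `1`, the `m`-th is at most `2/(w+1)`. -/
lemma binomProb_sq_mul_le_of_le_mean (hm : (m : ℝ) ≤ q * (k + 1)) :
    binomProb k q m ^ 2 * ((k + 1) * q * (1 - q)) ≤ 16 := by
  set T := (k + 1) * q * (1 - q)
  have h1q : 0 < 1 - q := by linarith
  have hT0 : 0 < T := by positivity
  obtain ⟨w, hwT, hTw⟩ : ∃ w : ℕ, 4 * (w : ℝ) ^ 2 ≤ T ∧ T < 4 * ((w : ℝ) + 1) ^ 2 := by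
    refine ⟨⌊√T / 2⌋₊, ?_, ?_⟩
    · nlinarith [Nat.floor_le (by positivity : 0 ≤ √T / 2), Real.sq_sqrt hT0.le,
        Nat.cast_nonneg (α := ℝ) ⌊√T / 2⌋₊]
    · nlinarith [Nat.lt_floor_add_one (√T / 2), Real.sq_sqrt hT0.le, Real.sqrt_nonneg T]
  have h2w : 2 * (w : ℝ) ≤ T := by
    rcases Nat.eq_zero_or_pos w with rfl | hw
    · simpa using hT0.le
    · have : (1 : ℝ) ≤ w := by exact_mod_cast hw
      nlinarith
  have hρ0 : 0 ≤ 1 - 2 * w / T := by rw [sub_nonneg, div_le_one hT0]; exact h2w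
  have hρ1 : 1 - 2 * w / T ≤ 1 := by linarith [show 0 ≤ 2 * (w : ℝ) / T by positivity]
  have hρw : 1 / 2 ≤ (1 - 2 * w / T) ^ w := by
    have hb := one_add_mul_le_pow (a := -(2 * w / T)) (by linarith [div_le_one hT0 |>.mpr h2w]) w
    have : (w : ℝ) * (2 * w / T) ≤ 1 / 2 := by
      rw [mul_div_assoc', div_le_iff₀ hT0]; linarith
    rw [← sub_eq_add_neg] at hb
    linarith
  have hp0 : 0 ≤ binomProb k q m := binomProb_nonneg k hq0.le hq1.le m
  have hwindow := succ_mul_pow_mul_le_sum_Ico hρ0 hρ1 hp0 fun i _ hiw ↦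
    one_sub_mul_binomProb_le_succ hq0 hq1 h2w (by
      have : (i : ℝ) + 1 ≤ m + w := by exact_mod_cast hiw
      linarith)
  have hpm : binomProb k q m * ((w : ℝ) + 1) ≤ 2 := by
    nlinarith [sum_binomProb_le_one k hq0.le hq1.le (Ico m (m + w + 1))]
  calc binomProb k q m ^ 2 * T ≤ binomProb k q m ^ 2 * (4 * ((w : ℝ) + 1) ^ 2) := by gcongr
    _ = 4 * (binomProb k q m * ((w : ℝ) + 1)) ^ 2 := by ring
    _ ≤ 4 * 2 ^ 2 := by gcongr
    _ = 16 := by norm_num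

lemma binomProb_sq_mul_le : binomProb k q m ^ 2 * ((k + 1) * q * (1 - q)) ≤ 16 := by
  rcases le_or_gt m k with hmk | hkm
  · rcases le_total (m : ℝ) (q * (k + 1)) with hm | hm
    · exact binomProb_sq_mul_le_of_le_mean hq0 hq1 hm
    · have hsymm := binomProb_sq_mul_le_of_le_mean (q := 1 - q) (m := k - m)
        (by linarith) (by linarith)
        (by push_cast [hmk]; linarith)
      rw [binomProb_one_sub k hmk, sub_sub_cancel] at hsymm
      linarith
  · simp [binomProb_eq_zero_of_lt k hkm]

end binomProbBound

theorem Nat.centralBinom_sq_mul_succ_le (k : ℕ) : k.centralBinom ^ 2 * (k + 1) ≤ 16 ^ k := by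
  induction k with
  | zero => simp
  | succ k ih =>
    have hrec := Nat.succ_mul_centralBinom_succ k
    have hpoly : (2 * k + 1) ^ 2 * (k + 2) ≤ 4 * (k + 1) ^ 3 := by ring_nf; omega
    refine Nat.le_of_mul_le_mul_left ?_ (show 0 < (k + 1) ^ 2 by positivity)
    calc (k + 1) ^ 2 * ((k + 1).centralBinom ^ 2 * (k + 1 + 1))
        = ((k + 1) * (k + 1).centralBinom) ^ 2 * (k + 2) := by ring
      _ = 4 * ((2 * k + 1) ^ 2 * (k + 2)) * k.centralBinom ^ 2 := by rw [hrec]; ring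
      _ ≤ 4 * (4 * (k + 1) ^ 3) * k.centralBinom ^ 2 := by gcongr
      _ = 16 * (k + 1) ^ 2 * (k.centralBinom ^ 2 * (k + 1)) := by ring
      _ ≤ 16 * (k + 1) ^ 2 * 16 ^ k := by gcongr
      _ = (k + 1) ^ 2 * 16 ^ (k + 1) := by ring

theorem Nat.doubleFactorial_mul_two_pow_eq_centralBinom_mul_choose (m d : ℕ) :
    (2 * (m + d) + 1)‼ * 2 ^ (m + d) =
      (2 * (m + d) + 1) * (m + d).centralBinom * (m + d).choose m * m ! * d ! := by
  set k := m + d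
  have hk : k ! = k.choose m * m ! * d ! := by
    have := Nat.choose_mul_factorial_mul_factorial (Nat.le_add_right m d)
    rwa [Nat.add_sub_cancel_left, eq_comm] at this
  have hcb : k.centralBinom * k ! * k ! = (2 * k)! := by
    have := Nat.choose_mul_factorial_mul_factorial (show k ≤ 2 * k by omega)
    rwa [show 2 * k - k = k by omega, ← Nat.centralBinom_eq_two_mul_choose] at this
  refine Nat.eq_of_mul_eq_mul_right (Nat.factorial_pos k) ?_
  calc (2 * k + 1)‼ * 2 ^ k * k ! = (2 * k + 1)‼ * (2 * k)‼ := by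
        rw [Nat.doubleFactorial_two_mul]; ring
    _ = (2 * k + 1) * (k.centralBinom * k ! * k !) := by
        rw [← Nat.factorial_eq_mul_doubleFactorial, hcb, Nat.factorial_succ]
    _ = _ := by rw [hk]; ring

lemma doubleFactorial_two_mul_add_one_le {q : ℝ} (hq0 : 0 < q) (hq1 : q < 1) (m d : ℕ) :
    ((2 * (m + d) + 1)‼ : ℝ) ≤
      8 / √(q * (1 - q)) * (2 / q) ^ m * (2 / (1 - q)) ^ d * m ! * d ! := by
  set k := m + d
  set s := √(q * (1 - q))
  have h1q : 0 < 1 - q := by linarith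
  have hs : 0 < s := Real.sqrt_pos.mpr (by positivity)
  have hs2 : s ^ 2 = q * (1 - q) := Real.sq_sqrt (by positivity)
  have hcb : (k.centralBinom : ℝ) ^ 2 * (k + 1) ≤ 16 ^ k := by
    exact_mod_cast Nat.centralBinom_sq_mul_succ_le k
  have hbp := binomProb_sq_mul_le hq0 hq1 (k := k) (m := m)
  have hbp0 := binomProb_nonneg k hq0.le hq1.le m
  have hprod : k.centralBinom * binomProb k q m * ((k + 1) * s) ≤ 4 ^ (k + 1) := by
    refine (sq_le_sq₀ (by positivity) (by positivity)).mp ?_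
    calc (k.centralBinom * binomProb k q m * ((k + 1) * s)) ^ 2
        = (k.centralBinom ^ 2 * (k + 1)) * (binomProb k q m ^ 2 * ((k + 1) * q * (1 - q))) := by
          rw [mul_pow, mul_pow, mul_pow, hs2]; ring
      _ ≤ 16 ^ k * 16 := by gcongr
      _ = (4 ^ (k + 1)) ^ 2 := by rw [sq, ← mul_pow, pow_succ]; norm_num
  have hdf : ((2 * k + 1)‼ : ℝ) * (q ^ m * (1 - q) ^ d) =
      (2 * k + 1) * k.centralBinom * binomProb k q m * m ! * d ! / 2 ^ k := by
    have h : (((2 * k + 1)‼ * 2 ^ k : ℕ) : ℝ) =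
        ((2 * k + 1) * k.centralBinom * k.choose m * m ! * d ! : ℕ) :=
      congrArg _ (Nat.doubleFactorial_mul_two_pow_eq_centralBinom_mul_choose m d)
    push_cast at h
    rw [binomProb, show k - m = d by omega, eq_div_iff (by positivity)]
    linear_combination q ^ m * (1 - q) ^ d * h
  refine le_of_mul_le_mul_right ?_ (show 0 < q ^ m * (1 - q) ^ d * ((k + 1) * s) by positivity)
  calc ((2 * k + 1)‼ : ℝ) * (q ^ m * (1 - q) ^ d * ((k + 1) * s))
      = (2 * k + 1) * (m ! * d !) * (k.centralBinom * binomProb k q m * ((k + 1) * s)) / 2 ^ k := by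
        rw [← mul_assoc, hdf]; ring
    _ ≤ (2 * k + 1) * (m ! * d !) * 4 ^ (k + 1) / 2 ^ k := by gcongr
    _ ≤ 2 * (k + 1) * (m ! * d !) * 4 ^ (k + 1) / 2 ^ k := by gcongr; linarith
    _ = 8 / s * (2 / q) ^ m * (2 / (1 - q)) ^ d * m ! * d ! *
          (q ^ m * (1 - q) ^ d * ((k + 1) * s)) := by
        rw [div_pow, div_pow, pow_succ, show (4 : ℝ) = 2 * 2 by norm_num, mul_pow]
        field_simp
        push_cast [k]
        ring

lemma Pfun_pos {u : ℝ} (hu : 0 < u) : 0 < Pfun u := by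
  unfold Pfun
  split_ifs with h
  · positivity
  · have : 0 < 10 * u - 2 := by linarith [not_lt.mp h]
    positivity

/- For `u < 2/5` no `q` gives both `2/q ≤ 10u` and `2/(1 - q) ≤ 4u P(u) = 8/(5u)`; with `q = 1/2`
the excess `4 > 10u` on the `m` factors is paid for by `8/(5u) ≥ 4` on the `d ≥ m` factors. -/
lemma doubleFactorial_le_Pfun_of_lt {u : ℝ} (hu : 0 < u) (hu2 : u < 2 / 5) {m d : ℕ} (hmd : m ≤ d) :
    ((2 * (m + d) + 1)‼ : ℝ) ≤ 16 * (10 * u) ^ m * (4 * u * Pfun u) ^ d * m ! * d ! := by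
  have hP : 4 * u * Pfun u = 8 / (5 * u) := by
    rw [Pfun, if_pos hu2]; field_simp; ring
  obtain ⟨e, rfl⟩ := Nat.exists_eq_add_of_le hmd
  have hpow : (4 : ℝ) ^ m * 4 ^ (m + e) ≤ (10 * u) ^ m * (4 * u * Pfun u) ^ (m + e) := by
    have h4 : (4 : ℝ) ≤ 8 / (5 * u) := by rw [le_div_iff₀ (by positivity)]; linarith
    calc (4 : ℝ) ^ m * 4 ^ (m + e) = 16 ^ m * 4 ^ e := by
          rw [pow_add, ← mul_assoc, ← mul_pow]; norm_num
      _ ≤ 16 ^ m * (8 / (5 * u)) ^ e := by gcongr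
      _ = (10 * u) ^ m * (4 * u * Pfun u) ^ (m + e) := by
          rw [hP, pow_add, ← mul_assoc, ← mul_pow]; field_simp; norm_num
  have hsq : √((1 / 2 : ℝ) * (1 - 1 / 2)) = 1 / 2 := by
    rw [show (1 / 2 : ℝ) * (1 - 1 / 2) = (1 / 2) ^ 2 by norm_num, Real.sqrt_sq (by norm_num)]
  calc ((2 * (m + (m + e)) + 1)‼ : ℝ)
      ≤ 8 / √((1 / 2 : ℝ) * (1 - 1 / 2)) * (2 / (1 / 2)) ^ m * (2 / (1 - 1 / 2)) ^ (m + e) *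
          m ! * (m + e)! :=
        doubleFactorial_two_mul_add_one_le (by norm_num) (by norm_num) m (m + e)
    _ = 16 * (4 ^ m * 4 ^ (m + e)) * (m ! * (m + e)!) := by rw [hsq]; norm_num; ring
    _ ≤ 16 * ((10 * u) ^ m * (4 * u * Pfun u) ^ (m + e)) * (m ! * (m + e)!) := by gcongr
    _ = _ := by ring

lemma doubleFactorial_le_Pfun_of_ge {u : ℝ} (hu2 : 2 / 5 ≤ u) (m d : ℕ) :
    ((2 * (m + d) + 1)‼ : ℝ) ≤ 40 * u * (10 * u) ^ m * (4 * u * Pfun u) ^ d * m ! * d ! := by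
  have hu : 0 < u := by linarith
  set q := 1 / (5 * u) with hq
  have hq0 : 0 < q := by positivity
  have hq2 : q ≤ 1 / 2 := by rw [div_le_div_iff₀ (by positivity) (by norm_num)]; linarith
  have hP : 2 / (1 - q) = 4 * u * Pfun u := by
    have : 5 * u - 1 ≠ 0 := by linarith
    rw [Pfun, if_neg (not_lt.mpr hu2), hq, show 10 * u - 2 = 2 * (5 * u - 1) by ring,
      one_sub_div (by positivity)]
    field_simp
    ring
  have hsq : 8 / √(q * (1 - q)) ≤ 40 * u := by
    have hqs : q ≤ √(q * (1 - q)) := Real.le_sqrt_of_sq_le (by nlinarith)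
    calc 8 / √(q * (1 - q)) ≤ 8 / q := by gcongr
      _ = 40 * u := by rw [hq]; field_simp; ring
  have hP0 := Pfun_pos hu
  calc ((2 * (m + d) + 1)‼ : ℝ)
      ≤ 8 / √(q * (1 - q)) * (2 / q) ^ m * (2 / (1 - q)) ^ d * m ! * d ! :=
        doubleFactorial_two_mul_add_one_le hq0 (by linarith) m d
    _ = 8 / √(q * (1 - q)) * ((10 * u) ^ m * (4 * u * Pfun u) ^ d * (m ! * d !)) := by
        rw [hP, show 2 / q = 10 * u by rw [hq]; field_simp; ring]; ring
    _ ≤ 40 * u * ((10 * u) ^ m * (4 * u * Pfun u) ^ d * (m ! * d !)) := by gcongr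
    _ = _ := by ring

lemma doubleFactorial_le_Pfun {u : ℝ} (hu : 0 < u) {m d : ℕ} (hmd : m ≤ d) :
    ((2 * (m + d) + 1)‼ : ℝ) ≤ (16 + 40 * u) * (10 * u) ^ m * (4 * u * Pfun u) ^ d * m ! * d ! := by
  have hP0 := Pfun_pos hu
  rcases lt_or_ge u (2 / 5) with hu2 | hu2
  · exact (doubleFactorial_le_Pfun_of_lt hu hu2 hmd).trans (by gcongr; linarith)
  · exact (doubleFactorial_le_Pfun_of_ge hu2 m d).trans (by gcongr; linarith)

lemma summand_mul_eq {u : ℝ} (hu : u ≠ 0) (P : ℝ) (a g m : ℕ) :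
    (15 ^ m : ℝ)⁻¹ * (6 ^ (a + 1))⁻¹ / (m ! * 24 ^ g * g !) *
        ((3 / 2) ^ (m + a + 2) / (3 / 2) ^ (2 * g)) * (u ^ (m + a + 1))⁻¹ *
        (8 * u / 3 * (10 * u) ^ m * (4 * u * P) ^ (a + g) * m ! * (a + g)!)
      = (2 * u / 27) ^ g * P ^ (a + g) * (a + g)! / g ! := by
  have h15 : (15 : ℝ) ^ m = 3 ^ m * 5 ^ m := by rw [← mul_pow]; norm_num
  have h6 : (6 : ℝ) ^ a = 2 ^ a * 3 ^ a := by rw [← mul_pow]; norm_num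
  have h24 : (24 : ℝ) ^ g = 8 ^ g * 3 ^ g := by rw [← mul_pow]; norm_num
  have h8 : (8 : ℝ) ^ g = 2 ^ g * 4 ^ g := by rw [← mul_pow]; norm_num
  have h4 : (4 : ℝ) ^ g = 2 ^ g * 2 ^ g := by rw [← mul_pow]; norm_num
  have h4' : (4 : ℝ) ^ a = 2 ^ a * 2 ^ a := by rw [← mul_pow]; norm_num
  have h27 : (27 : ℝ) ^ g = 3 ^ g * 3 ^ g * 3 ^ g := by rw [← mul_pow, ← mul_pow]; norm_num
  have h10 : (10 : ℝ) ^ m = 2 ^ m * 5 ^ m := by rw [← mul_pow]; norm_num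
  rw [div_pow, div_pow, div_pow, mul_pow, mul_pow, mul_pow, mul_pow, h15, pow_succ, h6, h24, h8,
    h10, pow_add 4, h4, h4', h27]
  field_simp
  ring

lemma summand_le {u : ℝ} (hu : 0 < u) {a g m : ℕ} (hm : m ≤ a + g) :
    (15 ^ m : ℝ)⁻¹ * (6 ^ (a + 1))⁻¹ * ((2 * (m + (a + g)) + 1)‼ : ℝ) / (m ! * 24 ^ g * g !) *
        ((3 / 2) ^ (m + a + 2) / (3 / 2) ^ (2 * g)) * (u ^ (m + a + 1))⁻¹
      ≤ (6 / u + 15) * (2 * u / 27) ^ g * Pfun u ^ (a + g) * (a + g)! / g ! := by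
  have hE := summand_mul_eq hu.ne' (Pfun u) a g m
  set E := (15 ^ m : ℝ)⁻¹ * (6 ^ (a + 1))⁻¹ / (m ! * 24 ^ g * g !) *
    ((3 / 2) ^ (m + a + 2) / (3 / 2) ^ (2 * g)) * (u ^ (m + a + 1))⁻¹ with hEdef
  have hE0 : 0 ≤ E := by positivity
  calc _ = ((2 * (m + (a + g)) + 1)‼ : ℝ) * E := by rw [hEdef]; ring
    _ ≤ (16 + 40 * u) * (10 * u) ^ m * (4 * u * Pfun u) ^ (a + g) * m ! * (a + g)! * E := by
        gcongr
        exact doubleFactorial_le_Pfun hu hm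
    _ = (6 / u + 15) *
          (E * (8 * u / 3 * (10 * u) ^ m * (4 * u * Pfun u) ^ (a + g) * m ! * (a + g)!)) := by
        field_simp; ring
    _ = _ := by rw [hE]; ring

/-- each term of Aggarwal's bound applied to the Painlevé I amplitudes is
dominated by `S (2u/27)^g P(u)^D D!/g!` with `D = 3g - 3 + n`. -/
theorem stmt_10 (u : ℝ) (hu : 0 < u) :
    ∃ S : ℝ, 0 < S ∧
      ∀ g n : ℕ, 2 < 2 * g + n → ∀ κ : ℕ, κ ≤ 3 * g + n - 3 →
        ((15 : ℝ) ^ (3 * g + n - 3 - κ))⁻¹ * ((6 : ℝ) ^ (2 * g + n - 2))⁻¹ *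
            (Nat.doubleFactorial (4 * (3 * g + n - 3) + 1 - 2 * κ) : ℝ) /
              ((Nat.factorial (3 * g + n - 3 - κ) : ℝ) * 24 ^ g * (Nat.factorial g : ℝ)) *
            ((3 : ℝ) / 2) ^ (3 * (g : ℤ) + 2 * n - 4 - κ) *
            u ^ (-(5 * (g : ℤ) + 2 * n - 5 - κ))
          ≤ S * (2 * u / 27) ^ g * Pfun u ^ (3 * g + n - 3) *
              (Nat.factorial (3 * g + n - 3) : ℝ) / (Nat.factorial g : ℝ) := by
  refine ⟨6 / u + 15, by positivity, fun g n hgn κ hκ ↦ ?_⟩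
  obtain ⟨a, ha⟩ : ∃ a, n + 2 * g = a + 3 := ⟨n + 2 * g - 3, by omega⟩
  obtain ⟨m, hm⟩ : ∃ m, a + g = κ + m := ⟨a + g - κ, by omega⟩
  rw [show 3 * g + n - 3 = a + g by omega, show a + g - κ = m by omega,
    show 2 * g + n - 2 = a + 1 by omega,
    show 4 * (a + g) + 1 - 2 * κ = 2 * (m + (a + g)) + 1 by omega,
    show 3 * (g : ℤ) + 2 * n - 4 - κ = ((m + a + 2 : ℕ) : ℤ) - ((2 * g : ℕ) : ℤ) by
      push_cast; omega,
    show -(5 * (g : ℤ) + 2 * n - 5 - κ) = -((m + a + 1 : ℕ) : ℤ) by push_cast; omega,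
    zpow_sub₀ (by norm_num), zpow_neg, zpow_natCast, zpow_natCast, zpow_natCast]
  exact summand_le hu (by omega)

end
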